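/- In a group generated by elements satisfying the relations π_m² = 1 for all m ≥ 0, π_m π_q = π_q π_m whenever |m − q| ≥ 2, and π_m π_{m+1} π_m = π_{m+1} π_m π_{m+1} for all m ≥ 0, the corresponding elements in the homeomorphism group of 𝔠ⁿ defined by π_m = (0^m prefix applied to the transposition ⟨(01,ε,…,ε),(1,ε,…,ε)⟩) — i.e., π_m is the transposition exchanging Γ(0^m 01, ε,…,ε) and Γ(0^m 1, ε,…,ε) — indeed satisfy all three families of relations. -/

import Mathlib

open scoped Classical

/-- Finite words over the alphabet `{0,1}`. -/
abbrev Word := List Bool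
/-- Cantor space: infinite `{0,1}`-sequences. -/
abbrev Cantor := ℕ → Bool

/-- Concatenate a finite word with an infinite sequence. -/
def catW (α : Word) (w : Cantor) : Cantor :=
  fun i => if h : i < α.length then α.get ⟨i, h⟩ else w (i - α.length)

/-- The basic open set of sequences having `α` as a prefix. -/
def GammaW (α : Word) : Set Cantor := Set.range (catW α)

/-- Incomparability of words: neither is a prefix of the other. -/
def IncompW (α β : Word) : Prop := ¬ α <+: β ∧ ¬ β <+: α

/-- Addresses: `n`-tuples of finite words. -/
abbrev Addr (n : ℕ) := Fin n → Word
/-- `n`-dimensional Cantor space. -/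
abbrev CantorN (n : ℕ) := Fin n → Cantor

/-- The basic open set in `𝔠ⁿ` indexed by the address `α`. -/
def GammaN {n : ℕ} (α : Addr n) : Set (CantorN n) :=
  { w | ∀ d, w d ∈ GammaW (α d) }

/-- Incomparability of addresses: some coordinate pair is incomparable. -/
def IncompA {n : ℕ} (α β : Addr n) : Prop := ∃ d, IncompW (α d) (β d)

/-- Drop the first `k` symbols of an infinite sequence. -/
def dropSeq (k : ℕ) (w : Cantor) : Cantor := fun i => w (i + k)

/-- Prepend the address `α` coordinatewise. -/
def catA {n : ℕ} (α : Addr n) (u : CantorN n) : CantorN n :=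
  fun d => catW (α d) (u d)

/-- Remove the prefix `α` coordinatewise. -/
def dropA {n : ℕ} (α : Addr n) (w : CantorN n) : CantorN n :=
  fun d => dropSeq ((α d).length) (w d)

/-- The transposition `⟨α β⟩` of `𝔠ⁿ`: exchanges `Γ(α)` and `Γ(β)` by prefix
substitution and fixes all other points. -/
noncomputable def swapN {n : ℕ} (α β : Addr n) : CantorN n → CantorN n :=
  fun w =>
    if w ∈ GammaN α then catA β (dropA α w)
    else if w ∈ GammaN β then catA α (dropA β w)
    else w

/-- Append the symbol `x` to the `d`-th coordinate of the address `α`. -/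
def appA {n : ℕ} (α : Addr n) (d : Fin n) (x : Bool) : Addr n :=
  Function.update α d (α d ++ [x])

/-- Append the word `u` to the `d`-th coordinate of the address `α`. -/
def appW {n : ℕ} (α : Addr n) (d : Fin n) (u : Word) : Addr n :=
  Function.update α d (α d ++ u)

/-- Coordinatewise concatenation of addresses. -/
def concatA {n : ℕ} (α η : Addr n) : Addr n := fun d => α d ++ η d

/-- The address with word `u` in coordinate `d` and empty words elsewhere. -/
def unitA {n : ℕ} (d : Fin n) (u : Word) : Addr n :=
  fun e => if e = d then u else []

/-- Prepend a letter to an infinite sequence. -/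
def consSeq (b : Bool) (w : Cantor) : Cantor :=
  fun i => match i with
  | 0 => b
  | i + 1 => w i

/-- The full-support baker's map: moves the first letter of coordinate `1`
to the front of coordinate `d`. -/
def bakerFull {n : ℕ} [NeZero n] (d : Fin n) : CantorN n → CantorN n :=
  fun w e =>
    if e = 0 then dropSeq 1 (w 0)
    else if e = d then consSeq (w 0 0) (w d)
    else w e

/-- The inverse of the full-support baker's map: moves the first letter of
coordinate `d` to the front of coordinate `1`. -/
def invBakerFull {n : ℕ} [NeZero n] (d : Fin n) : CantorN n → CantorN n :=
  fun w e =>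
    if e = 0 then consSeq (w d 0) (w 0)
    else if e = d then dropSeq 1 (w d)
    else w e

/-- The index-`d` baker's map with support `Γ(α)`: sends `α.x₁.u ↦ α.x_d.u`
and fixes all points outside `Γ(α)`. -/
noncomputable def bakerN {n : ℕ} [NeZero n] (d : Fin n) (α : Addr n) :
    CantorN n → CantorN n :=
  fun w => if w ∈ GammaN α then catA α (bakerFull d (dropA α w)) else w

/-- The inverse of the index-`d` baker's map with support `Γ(α)`. -/
noncomputable def invBakerN {n : ℕ} [NeZero n] (d : Fin n) (α : Addr n) :
    CantorN n → CantorN n :=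
  fun w => if w ∈ GammaN α then catA α (invBakerFull d (dropA α w)) else w

/-- The partial prefix-substitution action of the symbol `⟨γ δ⟩` on addresses,
as a relation: `ActRel γ δ ζ ζ'` holds iff `ζ • ⟨γ δ⟩` is defined and
equals `ζ'`. -/
def ActRel {n : ℕ} (γ δ ζ ζ' : Addr n) : Prop :=
  (∃ η, ζ = concatA γ η ∧ ζ' = concatA δ η) ∨
  (∃ η, ζ = concatA δ η ∧ ζ' = concatA γ η) ∨
  (IncompA ζ γ ∧ IncompA ζ δ ∧ ζ' = ζ)

/-!
Every point of `𝔠` other than `0^∞` is uniquely `0^k 1 t`, and `π_m` acts only on the first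
coordinate, sending `0^k 1 t` to `0^τ(k) 1 t` with `τ` the transposition `(m m+1)` of `ℕ`.
Relabelling `k` by a permutation of `ℕ` in this way is a monoid action on `𝔠ⁿ`, so the three
families of relations follow from those of the adjacent transpositions in `Perm ℕ`.
-/

lemma catW_nil (t : Cantor) : catW [] t = t := by
  funext i
  simp [catW]

def zerosOne (j : ℕ) : Word := List.replicate j false ++ [true]

lemma length_zerosOne (j : ℕ) : (zerosOne j).length = j + 1 := by simp [zerosOne]

lemma catW_zerosOne_of_lt {k i : ℕ} (t : Cantor) (h : i < k) :
    catW (zerosOne k) t i = false := by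
  simp [catW, zerosOne, List.getElem_append_left, h, show i < k + 1 by omega]

lemma catW_zerosOne_self (k : ℕ) (t : Cantor) : catW (zerosOne k) t k = true := by
  simp [catW, zerosOne, List.getElem_append_right]

lemma catW_zerosOne_add (k : ℕ) (t : Cantor) (i : ℕ) :
    catW (zerosOne k) t (i + (k + 1)) = t i := by
  simp [catW, length_zerosOne, show ¬ i + (k + 1) < k + 1 by omega]

lemma dropSeq_catW_zerosOne (k : ℕ) (t : Cantor) :
    dropSeq (k + 1) (catW (zerosOne k) t) = t :=
  funext (catW_zerosOne_add k t)

lemma catW_zerosOne_injective {j k : ℕ} {t t' : Cantor}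
    (h : catW (zerosOne j) t = catW (zerosOne k) t') : j = k ∧ t = t' := by
  have hjk : j = k := by
    by_contra hne
    rcases Nat.lt_or_gt_of_ne hne with hlt | hlt
    · simpa [catW_zerosOne_self, catW_zerosOne_of_lt _ hlt] using congrFun h j
    · simpa [catW_zerosOne_self, catW_zerosOne_of_lt _ hlt] using congrFun h k
  subst hjk
  exact ⟨rfl, by rw [← dropSeq_catW_zerosOne j t, h, dropSeq_catW_zerosOne]⟩

lemma catW_zerosOne_mem_GammaW_iff {j k : ℕ} (t : Cantor) :
    catW (zerosOne k) t ∈ GammaW (zerosOne j) ↔ k = j := by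
  refine ⟨fun ⟨t', h⟩ => (catW_zerosOne_injective h).1.symm, ?_⟩
  rintro rfl
  exact ⟨t, rfl⟩

lemma false_notMem_GammaW_zerosOne (j : ℕ) :
    (fun _ => false : Cantor) ∉ GammaW (zerosOne j) := by
  rintro ⟨t, h⟩
  simpa [catW_zerosOne_self] using congrFun h j

lemma eq_false_or_eq_catW_zerosOne (w : Cantor) :
    w = (fun _ => false) ∨ ∃ k t, w = catW (zerosOne k) t := by
  by_cases h : ∃ i, w i = true
  · refine .inr ⟨Nat.find h, dropSeq (Nat.find h + 1) w, funext fun i => ?_⟩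
    rcases lt_trichotomy i (Nat.find h) with hi | rfl | hi
    · simpa [catW_zerosOne_of_lt _ hi] using Nat.find_min h hi
    · simpa [catW_zerosOne_self] using Nat.find_spec h
    · obtain ⟨m, rfl⟩ : ∃ m, i = m + (Nat.find h + 1) := ⟨i - (Nat.find h + 1), by omega⟩
      rw [catW_zerosOne_add]
      rfl
  · push Not at h
    exact .inl (funext fun i => by simpa using h i)

open Equiv

/-- Rewrites `0^k 1 t` as `0^(σ k) 1 t` and fixes `0^∞`. -/
noncomputable def relabel (σ : ℕ → ℕ) (w : Cantor) : Cantor :=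
  if h : ∃ i, w i = true then catW (zerosOne (σ (Nat.find h))) (dropSeq (Nat.find h + 1) w)
  else w

lemma relabel_false (σ : ℕ → ℕ) : relabel σ (fun _ => false) = fun _ => false := by
  simp [relabel]

lemma relabel_catW_zerosOne (σ : ℕ → ℕ) (k : ℕ) (t : Cantor) :
    relabel σ (catW (zerosOne k) t) = catW (zerosOne (σ k)) t := by
  have h : ∃ i, catW (zerosOne k) t i = true := ⟨k, catW_zerosOne_self k t⟩
  have hk : Nat.find h = k := (Nat.find_eq_iff h).2
    ⟨catW_zerosOne_self k t, fun i hi => by simp [catW_zerosOne_of_lt t hi]⟩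
  rw [relabel, dif_pos h, hk, dropSeq_catW_zerosOne]

lemma relabel_comp (σ τ : ℕ → ℕ) : relabel σ ∘ relabel τ = relabel (σ ∘ τ) := by
  funext w
  rcases eq_false_or_eq_catW_zerosOne w with rfl | ⟨k, t, rfl⟩
  · simp [relabel_false]
  · simp [relabel_catW_zerosOne]

lemma relabel_id : relabel id = id := by
  funext w
  rcases eq_false_or_eq_catW_zerosOne w with rfl | ⟨k, t, rfl⟩
  · simp [relabel_false]
  · simp [relabel_catW_zerosOne]

noncomputable def swapW (a b : Word) (w : Cantor) : Cantor :=
  if w ∈ GammaW a then catW b (dropSeq a.length w)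
  else if w ∈ GammaW b then catW a (dropSeq b.length w)
  else w

lemma swapW_zerosOne (j l : ℕ) : swapW (zerosOne j) (zerosOne l) = relabel (swap j l) := by
  funext w
  rcases eq_false_or_eq_catW_zerosOne w with rfl | ⟨k, t, rfl⟩
  · simp [swapW, relabel_false, false_notMem_GammaW_zerosOne]
  · simp only [swapW, catW_zerosOne_mem_GammaW_iff, relabel_catW_zerosOne, length_zerosOne,
      swap_apply_def]
    split_ifs <;> subst_vars <;> simp [dropSeq_catW_zerosOne]

variable {n : ℕ}

def mapAt (d : Fin n) (f : Cantor → Cantor) (w : CantorN n) : CantorN n :=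
  Function.update w d (f (w d))

lemma mapAt_comp (d : Fin n) (f g : Cantor → Cantor) :
    mapAt d f ∘ mapAt d g = mapAt d (f ∘ g) := by
  funext w
  simp [mapAt]

lemma mapAt_id (d : Fin n) : mapAt d id = id := by
  funext w
  simp [mapAt]

lemma mem_GammaN_unitA (d : Fin n) (a : Word) (w : CantorN n) :
    w ∈ GammaN (unitA d a) ↔ w d ∈ GammaW a := by
  refine ⟨fun h => by simpa [unitA] using h d, fun h e => ?_⟩
  by_cases he : e = d
  · subst he
    simpa [unitA] using h
  · simp only [unitA, if_neg he]
    exact ⟨w e, catW_nil (w e)⟩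

lemma catA_unitA_dropA_unitA (d : Fin n) (a b : Word) (w : CantorN n) :
    catA (unitA d b) (dropA (unitA d a) w) =
      Function.update w d (catW b (dropSeq a.length (w d))) := by
  funext e
  by_cases he : e = d
  · subst he
    simp [catA, dropA, unitA]
  · simp [catA, dropA, unitA, he, catW_nil]
    rfl

lemma swapN_unitA (d : Fin n) (a b : Word) :
    swapN (unitA d a) (unitA d b) = mapAt d (swapW a b) := by
  funext w
  simp only [swapN, swapW, mapAt, mem_GammaN_unitA, catA_unitA_dropA_unitA]
  split_ifs <;> simp

lemma mapAt_relabel_mul (d : Fin n) (σ τ : Perm ℕ) :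
    mapAt d (relabel σ) ∘ mapAt d (relabel τ) = mapAt d (relabel ⇑(σ * τ)) := by
  rw [mapAt_comp, relabel_comp, Perm.coe_mul]

lemma mapAt_relabel_one (d : Fin n) : mapAt d (relabel ⇑(1 : Perm ℕ)) = id := by
  rw [Perm.coe_one, relabel_id, mapAt_id]

lemma swap_succ_mul_swap_succ_comm {m q : ℕ} (h : m + 2 ≤ q ∨ q + 2 ≤ m) :
    swap (m + 1) m * swap (q + 1) q = swap (q + 1) q * swap (m + 1) m :=
  (Perm.Disjoint.commute (Perm.disjoint_swap_swap (by simp; omega))).eq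

lemma swap_succ_braid (m : ℕ) :
    swap (m + 1) m * (swap (m + 2) (m + 1) * swap (m + 1) m) =
      swap (m + 2) (m + 1) * (swap (m + 1) m * swap (m + 2) (m + 1)) := by
  rw [← mul_assoc, ← mul_assoc, swap_mul_swap_mul_swap (by omega) (by omega),
    swap_comm (m + 2) (m + 1), swap_comm (m + 1) m,
    swap_mul_swap_mul_swap (by omega) (by omega), swap_comm]

theorem stmt17_general (n : ℕ) [NeZero n]
    (π : ℕ → CantorN n → CantorN n)
    (hπ : ∀ m, π m = swapN (unitA 0 (List.replicate m false ++ [false, true]))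
                          (unitA 0 (List.replicate m false ++ [true]))) :
    (∀ m, π m ∘ π m = id) ∧
    (∀ m q, m + 2 ≤ q ∨ q + 2 ≤ m → π m ∘ π q = π q ∘ π m) ∧
    (∀ m, π m ∘ π (m + 1) ∘ π m = π (m + 1) ∘ π m ∘ π (m + 1)) := by
  have hπ_swap : ∀ m, π m = mapAt 0 (relabel (swap (m + 1) m)) := fun m => by
    rw [hπ, ← swapW_zerosOne, ← swapN_unitA, zerosOne, zerosOne, List.replicate_succ',
      List.append_assoc, List.singleton_append]
  simp only [hπ_swap, mapAt_relabel_mul]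
  refine ⟨fun m => ?_, fun m q h => ?_, fun m => ?_⟩
  · rw [swap_mul_self, mapAt_relabel_one]
  · rw [swap_succ_mul_swap_succ_comm h]
  · rw [swap_succ_braid]

/-- The homeomorphisms π_m = ⟨(0^m01,ε,…,ε) (0^m1,ε,…,ε)⟩ of `𝔠ⁿ` satisfy the
symmetric-group relations: π_m² = 1, π_m π_q = π_q π_m for |m − q| ≥ 2, and
the braid relations π_m π_{m+1} π_m = π_{m+1} π_m π_{m+1}. -/
theorem stmt17 (n : ℕ) [NeZero n] (hn : 2 ≤ n)
    (π : ℕ → CantorN n → CantorN n)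
    (hπ : ∀ m, π m = swapN (unitA 0 (List.replicate m false ++ [false, true]))
                          (unitA 0 (List.replicate m false ++ [true]))) :
    (∀ m, π m ∘ π m = id) ∧
    (∀ m q, m + 2 ≤ q ∨ q + 2 ≤ m → π m ∘ π q = π q ∘ π m) ∧
    (∀ m, π m ∘ π (m + 1) ∘ π m = π (m + 1) ∘ π m ∘ π (m + 1)) :=
  stmt17_general n π hπ
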